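/- arXiv:1505.02514 — 9 statements merged into one kernel-verified Lean document; each statement's English description precedes it below -/
import Mathlib

section
/- The explicit 4-coloring of the unit sphere S² defined by A₁ = {(x,y,z) ∈ S² : x>0, y≥0, z≥0}, A₂ = {(x,y,z) ∈ S² : x≤0, y>0, z≥0}, A₃ = {(x,y,z) ∈ S² : x≤0, y≤0, z>0}, A₄ = {(x,y,z) ∈ S² : x>0, y<0, z>0}, with color classes Eᵢ = Aᵢ ∪ (−Aᵢ), is an orthogonal coloring: the Eᵢ are pairwise disjoint, nonempty, their union is S², and no Eᵢ contains two points u, v with u·v = 0. -/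
/-!
Call a nonzero vector lexicographically positive if its last nonzero coordinate, reading
z, y, x, is positive; for every x ≠ 0 exactly one of ±x is. The four cones `A₁, …, A₄`
(without the condition ‖x‖ = 1) are pairwise disjoint and tile this lexicographically positive
half of ℝ³ ∖ {0}, so the symmetrized classes `Eᵢ` partition the sphere. Inside a single cone
every coordinatewise product `u k * v k` is nonnegative and the one at the strictly signed
coordinate is positive, so `⟪u, v⟫ > 0` there; on `Eᵢ` the inner product is `±` such a value.
-/

open Set Function RealInnerProductSpace

section SymmetricFamily

variable {V ι : Type*}

theorem pairwise_disjoint_union_neg [InvolutiveNeg V] {A : ι → Set V} {P : Set V}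
    (hP : Disjoint P (-P)) (hAP : ∀ i, A i ⊆ P) (hA : Pairwise (Disjoint on A)) :
    Pairwise (Disjoint on fun i => A i ∪ -A i) := by
  intro i j hij
  simp only [onFun, disjoint_union_left, disjoint_union_right]
  exact ⟨⟨hA hij, (hP.mono (hAP j) (neg_subset_neg.2 (hAP i))).symm⟩,
    hP.mono (hAP i) (neg_subset_neg.2 (hAP j)), (hA hij).preimage _⟩

theorem inner_ne_zero_of_mem_union_neg [NormedAddCommGroup V] [InnerProductSpace ℝ V]
    {A : Set V} (hA : ∀ u ∈ A, ∀ v ∈ A, 0 < ⟪u, v⟫) :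
    ∀ u ∈ A ∪ -A, ∀ v ∈ A ∪ -A, ⟪u, v⟫ ≠ 0 := by
  rintro u (hu | hu) v (hv | hv)
  · exact (hA u hu v hv).ne'
  · simpa [inner_neg_right] using (hA u hu (-v) hv).ne'
  · simpa [inner_neg_left] using (hA (-u) hu v hv).ne'
  · simpa [inner_neg_left, inner_neg_right] using (hA (-u) hu (-v) hv).ne'

end SymmetricFamily

local notation "ℝ³" => EuclideanSpace ℝ (Fin 3)

theorem EuclideanSpace.inner_fin_three (u v : ℝ³) :
    ⟪u, v⟫ = u 0 * v 0 + u 1 * v 1 + u 2 * v 2 := by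
  simp only [PiLp.inner_apply, RCLike.inner_apply, conj_trivial, Fin.sum_univ_three]
  ring

def lexPositive : Set ℝ³ :=
  {x | 0 < x 2 ∨ x 2 = 0 ∧ (0 < x 1 ∨ x 1 = 0 ∧ 0 < x 0)}

theorem lexPositive_disjoint_neg : Disjoint lexPositive (-lexPositive) := by
  rw [disjoint_left]
  intro x hx hnx
  simp only [lexPositive, mem_neg, mem_ofPred_eq, PiLp.neg_apply] at hx hnx
  rcases hx with h2 | ⟨h2, h1 | ⟨h1, h0⟩⟩ <;> rcases hnx with k2 | ⟨k2, k1 | ⟨k1, k0⟩⟩ <;> linarith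

theorem zero_notMem_lexPositive : (0 : ℝ³) ∉ lexPositive := fun h =>
  disjoint_left.1 lexPositive_disjoint_neg h (by rwa [mem_neg, neg_zero])

theorem mem_lexPositive_or_neg_mem {x : ℝ³} (hx : x ≠ 0) :
    x ∈ lexPositive ∨ -x ∈ lexPositive := by
  simp only [lexPositive, mem_ofPred_eq, PiLp.neg_apply, neg_pos, neg_eq_zero]
  rcases lt_trichotomy (x 2) 0 with h2 | h2 | h2 <;> [tauto; skip; tauto]
  rcases lt_trichotomy (x 1) 0 with h1 | h1 | h1 <;> [tauto; skip; tauto]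
  rcases lt_trichotomy (x 0) 0 with h0 | h0 | h0 <;> [tauto; skip; tauto]
  have : x = 0 := by
    ext i
    fin_cases i <;> assumption
  exact absurd this hx

/-- `signCone i` is the cone over `A_{i+1}`. -/
def signCone : Fin 4 → Set ℝ³ :=
  ![{x | x 0 > 0 ∧ x 1 ≥ 0 ∧ x 2 ≥ 0}, {x | x 0 ≤ 0 ∧ x 1 > 0 ∧ x 2 ≥ 0},
    {x | x 0 ≤ 0 ∧ x 1 ≤ 0 ∧ x 2 > 0}, {x | x 0 > 0 ∧ x 1 < 0 ∧ x 2 > 0}]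

theorem signCone_subset_lexPositive (i : Fin 4) : signCone i ⊆ lexPositive := by
  intro x hx
  fin_cases i <;> obtain ⟨h0, h1, h2⟩ := hx <;> unfold lexPositive <;> grind

theorem lexPositive_subset_iUnion_signCone : lexPositive ⊆ ⋃ i, signCone i := by
  intro x hx
  rw [mem_iUnion]
  rcases hx with h2 | ⟨h2, h1 | ⟨h1, h0⟩⟩
  · rcases le_or_gt (x 0) 0 with h0 | h0
    · rcases le_or_gt (x 1) 0 with h1 | h1
      · exact ⟨2, h0, h1, h2⟩
      · exact ⟨1, h0, h1, h2.le⟩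
    · rcases lt_or_ge (x 1) 0 with h1 | h1
      · exact ⟨3, h0, h1, h2⟩
      · exact ⟨0, h0, h1, h2.le⟩
  · rcases le_or_gt (x 0) 0 with h0 | h0
    · exact ⟨1, h0, h1, h2.ge⟩
    · exact ⟨0, h0, h1.le, h2.ge⟩
  · exact ⟨0, h0, h1.ge, h2.ge⟩

theorem pairwise_disjoint_signCone : Pairwise (Disjoint on signCone) := by
  intro i j hij
  rw [onFun, disjoint_left]
  intro x hi hj
  fin_cases i <;> fin_cases j <;> obtain ⟨h0, h1, h2⟩ := hi <;> obtain ⟨k0, k1, k2⟩ := hj <;> grind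

theorem inner_pos_of_mem_signCone {i : Fin 4} {u v : ℝ³} (hu : u ∈ signCone i)
    (hv : v ∈ signCone i) : 0 < ⟪u, v⟫ := by
  rw [EuclideanSpace.inner_fin_three]
  fin_cases i <;> obtain ⟨h0, h1, h2⟩ := hu <;> obtain ⟨k0, k1, k2⟩ := hv <;> nlinarith

theorem smul_mem_signCone {i : Fin 4} {c : ℝ} {x : ℝ³} (hc : 0 < c) (hx : x ∈ signCone i) :
    c • x ∈ signCone i := by
  fin_cases i <;> obtain ⟨h0, h1, h2⟩ := hx <;> refine ⟨?_, ?_, ?_⟩ <;>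
    simp only [PiLp.smul_apply, smul_eq_mul] <;> nlinarith

theorem signCone_nonempty (i : Fin 4) : (signCone i).Nonempty := by
  fin_cases i
  exacts [⟨!₂[1, 1, 1], by simp [signCone]⟩, ⟨!₂[-1, 1, 1], by simp [signCone]⟩,
    ⟨!₂[-1, -1, 1], by simp [signCone]⟩, ⟨!₂[1, -1, 1], by simp [signCone]⟩]

theorem sphere_inter_signCone_nonempty (i : Fin 4) :
    ({x : ℝ³ | ‖x‖ = 1} ∩ signCone i).Nonempty := by
  obtain ⟨x, hx⟩ := signCone_nonempty i
  have hx0 : x ≠ 0 := by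
    rintro rfl
    exact zero_notMem_lexPositive (signCone_subset_lexPositive i hx)
  exact ⟨‖x‖⁻¹ • x, norm_smul_inv_norm hx0, smul_mem_signCone (by positivity) hx⟩

theorem iUnion_sphere_inter_signCone_union_neg :
    ⋃ i, ({x : ℝ³ | ‖x‖ = 1} ∩ signCone i ∪ -({x | ‖x‖ = 1} ∩ signCone i)) = {x | ‖x‖ = 1} := by
  ext x
  simp only [mem_iUnion, mem_union, mem_inter_iff, mem_neg, mem_ofPred_eq, norm_neg]
  constructor
  · rintro ⟨i, ⟨hx, -⟩ | ⟨hx, -⟩⟩ <;> exact hx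
  · intro hx
    have hx0 : x ≠ 0 := by
      rintro rfl
      simp at hx
    rcases mem_lexPositive_or_neg_mem hx0 with h | h <;>
      obtain ⟨i, hi⟩ := mem_iUnion.1 (lexPositive_subset_iUnion_signCone h)
    exacts [⟨i, .inl ⟨hx, hi⟩⟩, ⟨i, .inr ⟨hx, hi⟩⟩]

theorem stmt_0 (A : Fin 4 → Set (EuclideanSpace ℝ (Fin 3)))
    (hA0 : A 0 = {x | ‖x‖ = 1 ∧ x 0 > 0 ∧ x 1 ≥ 0 ∧ x 2 ≥ 0})
    (hA1 : A 1 = {x | ‖x‖ = 1 ∧ x 0 ≤ 0 ∧ x 1 > 0 ∧ x 2 ≥ 0})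
    (hA2 : A 2 = {x | ‖x‖ = 1 ∧ x 0 ≤ 0 ∧ x 1 ≤ 0 ∧ x 2 > 0})
    (hA3 : A 3 = {x | ‖x‖ = 1 ∧ x 0 > 0 ∧ x 1 < 0 ∧ x 2 > 0})
    (E : Fin 4 → Set (EuclideanSpace ℝ (Fin 3)))
    (hE : ∀ i, E i = A i ∪ (-(A i))) :
    (∀ i j, i ≠ j → Disjoint (E i) (E j)) ∧
    (∀ i, (E i).Nonempty) ∧
    (⋃ i, E i) = {x : EuclideanSpace ℝ (Fin 3) | ‖x‖ = 1} ∧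
    (∀ i, ∀ u ∈ E i, ∀ v ∈ E i, (inner ℝ u v : ℝ) ≠ 0) := by
  obtain rfl : E = fun i => A i ∪ -A i := funext hE
  obtain rfl : A = fun i => {x | ‖x‖ = 1} ∩ signCone i := by
    funext i
    fin_cases i
    exacts [hA0, hA1, hA2, hA3]
  have hdisj : Pairwise (Disjoint on fun i => {x : ℝ³ | ‖x‖ = 1} ∩ signCone i) :=
    pairwise_disjoint_signCone.mono fun _ _ h => h.mono inter_subset_right inter_subset_right
  exact ⟨fun i j hij => pairwise_disjoint_union_neg lexPositive_disjoint_neg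
      (fun i => inter_subset_right.trans (signCone_subset_lexPositive i)) hdisj hij,
    fun i => (sphere_inter_signCone_nonempty i).mono subset_union_left,
    iUnion_sphere_inter_signCone_union_neg,
    fun i => inner_ne_zero_of_mem_union_neg fun u hu v hv => inner_pos_of_mem_signCone hu.2 hv.2⟩
end

section
/- Suppose the unit circle S¹ ⊂ ℝ² is covered by two closed sets B₁ and B₂ such that for all u, v, w ∈ Bᵢ (i = 1, 2) one has (u·v)(u·w)(v·w) ≥ 0. Then B₁ ∩ B₂ is nonempty. -/
/-!
The unit circle is connected, so if the two closed sets `B 0`, `B 1` were disjoint, one of them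
would be the whole circle. But the circle contains three unit vectors at mutual angles `2π/3`
(the cube roots of unity), whose pairwise inner products are all `-1/2`, so their triple product
is `-1/8 < 0`.
-/

open RealInnerProductSpace

section Orthonormal

variable {E : Type*} [NormedAddCommGroup E] [InnerProductSpace ℝ E] {e₁ e₂ : E}

theorem inner_smul_add_smul_eq_of_orthonormal (h₁ : ‖e₁‖ = 1) (h₂ : ‖e₂‖ = 1)
    (h₁₂ : ⟪e₁, e₂⟫ = 0) (a b c d : ℝ) :
    ⟪a • e₁ + b • e₂, c • e₁ + d • e₂⟫ = a * c + b * d := by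
  simp only [inner_add_left, inner_add_right, real_inner_smul_left, real_inner_smul_right,
    real_inner_self_eq_norm_sq, h₁, h₂, h₁₂, real_inner_comm e₁ e₂]
  ring

theorem exists_norm_eq_one_pairwise_inner_eq_neg_half (h₁ : ‖e₁‖ = 1) (h₂ : ‖e₂‖ = 1)
    (h₁₂ : ⟪e₁, e₂⟫ = 0) :
    ∃ u v w : E, ‖u‖ = 1 ∧ ‖v‖ = 1 ∧ ‖w‖ = 1 ∧
      ⟪u, v⟫ = -1 / 2 ∧ ⟪u, w⟫ = -1 / 2 ∧ ⟪v, w⟫ = -1 / 2 := by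
  have hinner := inner_smul_add_smul_eq_of_orthonormal h₁ h₂ h₁₂
  have hnorm (a b : ℝ) (hab : a * a + b * b = 1) : ‖a • e₁ + b • e₂‖ = 1 := by
    rw [norm_eq_sqrt_real_inner, hinner, hab, Real.sqrt_one]
  have hs : √3 * √3 = 3 := Real.mul_self_sqrt (by norm_num)
  refine ⟨(1 : ℝ) • e₁ + (0 : ℝ) • e₂, (-1 / 2 : ℝ) • e₁ + (√3 / 2) • e₂,
    (-1 / 2 : ℝ) • e₁ + (-√3 / 2) • e₂, hnorm _ _ (by norm_num), hnorm _ _ (by linarith),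
    hnorm _ _ (by linarith), ?_, ?_, ?_⟩ <;>
  · rw [hinner]
    linarith

end Orthonormal

theorem isPreconnected_setOf_norm_eq_one_euclideanSpace_fin_two :
    IsPreconnected {x : EuclideanSpace ℝ (Fin 2) | ‖x‖ = 1} := by
  have hrank : 1 < Module.rank ℝ (EuclideanSpace ℝ (Fin 2)) := by
    rw [← Module.finrank_eq_rank, finrank_euclideanSpace_fin]
    norm_num
  have hsphere : {x : EuclideanSpace ℝ (Fin 2) | ‖x‖ = 1} = Metric.sphere 0 1 := by
    ext x
    simp
  rw [hsphere]
  exact (isConnected_sphere hrank 0 zero_le_one).isPreconnected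

theorem stmt_2_general (B : Fin 2 → Set (EuclideanSpace ℝ (Fin 2)))
    (hclosed : ∀ i, IsClosed (B i))
    (hcover : B 0 ∪ B 1 = {x : EuclideanSpace ℝ (Fin 2) | ‖x‖ = 1})
    (hloc : ∀ i, ∀ u ∈ B i, ∀ v ∈ B i, ∀ w ∈ B i,
      (inner ℝ u v : ℝ) * (inner ℝ u w : ℝ) * (inner ℝ v w : ℝ) ≥ 0) :
    (B 0 ∩ B 1).Nonempty := by
  by_contra hdisj
  rw [Set.not_nonempty_iff_eq_empty] at hdisj
  obtain ⟨i, hi⟩ : ∃ i, {x : EuclideanSpace ℝ (Fin 2) | ‖x‖ = 1} ⊆ B i := by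
    rcases isPreconnected_iff_subset_of_disjoint_closed.1
        isPreconnected_setOf_norm_eq_one_euclideanSpace_fin_two _ _ (hclosed 0) (hclosed 1)
        hcover.ge (by rw [hdisj, Set.inter_empty]) with h | h
    exacts [⟨0, h⟩, ⟨1, h⟩]
  obtain ⟨u, v, w, hu, hv, hw, huv, huw, hvw⟩ :=
    exists_norm_eq_one_pairwise_inner_eq_neg_half
      (e₁ := EuclideanSpace.single (0 : Fin 2) (1 : ℝ)) (e₂ := EuclideanSpace.single 1 1)
      (by simp) (by simp) (by simp [EuclideanSpace.inner_single_left])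
  have hprod := hloc i u (hi hu) v (hi hv) w (hi hw)
  rw [huv, huw, hvw] at hprod
  norm_num at hprod

theorem stmt_2 (B : Fin 2 → Set (EuclideanSpace ℝ (Fin 2)))
    (hsub : ∀ i, B i ⊆ {x : EuclideanSpace ℝ (Fin 2) | ‖x‖ = 1})
    (hclosed : ∀ i, IsClosed (B i))
    (hcover : B 0 ∪ B 1 = {x : EuclideanSpace ℝ (Fin 2) | ‖x‖ = 1})
    (hloc : ∀ i, ∀ u ∈ B i, ∀ v ∈ B i, ∀ w ∈ B i,
      (inner ℝ u v : ℝ) * (inner ℝ u w : ℝ) * (inner ℝ v w : ℝ) ≥ 0) :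
    (B 0 ∩ B 1).Nonempty :=
  stmt_2_general B hclosed hcover hloc
end

section
/- Suppose the unit circle S¹ ⊂ ℝ² is covered by two closed sets B₁ and B₂ such that for all u, v, w ∈ Bᵢ (i = 1, 2) one has (u·v)(u·w)(v·w) ≥ 0. Then there is a rotation of the circle after which B₁ equals the union of the two closed antipodal arcs {(cos θ, sin θ) : θ ∈ [π/2, π]} ∪ {(cos θ, sin θ) : θ ∈ [3π/2, 2π]} and B₂ equals the union {(cos θ, sin θ) : θ ∈ [0, π/2]} ∪ {(cos θ, sin θ) : θ ∈ [π, 3π/2]}; in particular B₁ ∩ B₂ consists of the four vertices of a square inscribed in S¹. -/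
/-!
Read on angles (`⟪circlePt x, circlePt y⟫ = cos (x - y)`), the hypothesis says that
`cos (x - y) * cos (x - z) * cos (y - z) ≥ 0` for any three angles `x, y, z` of the same set.
Evaluated on suitable triples this gives two rules: no set contains an arc longer than `π/2`, and
a set containing an arc `(c, d)` of length at most `π/2` misses the arc `(c + π/2, d + π/2)`.
A maximal open arc `(a, b)` missing `B 0` lies in `B 1`, so it has length at most `π/2`; the
second rule puts `(a + π/2, b + π/2)` into `B 0`, and together with `a, b ∈ B 0` this forces
`b = a + π/2`. Applying the second rule quarter by quarter around the circle, alternately to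
`B 1` and `B 0`, then determines both sets.
-/

open scoped RealInnerProductSpace
open Real

/-- The point on the unit circle at angle `θ`. -/
noncomputable def circlePt (θ : ℝ) : EuclideanSpace ℝ (Fin 2) :=
  (WithLp.equiv 2 (Fin 2 → ℝ)).symm ![Real.cos θ, Real.sin θ]

open Set

section

variable {α : Type*}

theorem IsClosed.exists_Ioo_disjoint [ConditionallyCompleteLinearOrder α] [TopologicalSpace α]
    [OrderTopology α] {S : Set α} (hS : IsClosed S) {x τ y : α} (hx : x ∈ S) (hy : y ∈ S)
    (hxτ : x ≤ τ) (hτy : τ ≤ y) (hτ : τ ∉ S) :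
    ∃ a b, a ∈ S ∧ b ∈ S ∧ a < b ∧ Disjoint (Ioo a b) S := by
  have hL : BddAbove (S ∩ Iic τ) := ⟨τ, fun _ h => h.2⟩
  have hU : BddBelow (S ∩ Ici τ) := ⟨τ, fun _ h => h.2⟩
  obtain ⟨haS, haτ⟩ := (hS.inter isClosed_Iic).csSup_mem ⟨x, hx, hxτ⟩ hL
  obtain ⟨hbS, hτb⟩ := (hS.inter isClosed_Ici).csInf_mem ⟨y, hy, hτy⟩ hU
  refine ⟨_, _, haS, hbS, (haτ.lt_of_ne (ne_of_mem_of_not_mem haS hτ)).trans_le hτb, ?_⟩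
  refine disjoint_left.2 fun t ⟨hat, htb⟩ htS => ?_
  rcases le_total t τ with h | h
  · exact (le_csSup hL ⟨htS, h⟩).not_gt hat
  · exact (csInf_le hU ⟨htS, h⟩).not_gt htb

namespace Set

variable [LinearOrder α] {S T : Set α} {p q r s w : α}

theorem Ioc_inter_eq_Icc_union_Icc (hpq : p < q) (hqr : q ≤ r) (hrs : r ≤ s) (hsw : s ≤ w)
    (hq : Icc q r ⊆ S) (hs : Icc s w ⊆ S) (hp : Disjoint (Ioo p q) S)
    (hr : Disjoint (Ioo r s) S) : Ioc p w ∩ S = Icc q r ∪ Icc s w := by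
  ext t
  refine ⟨fun ⟨⟨hpt, htw⟩, htS⟩ => ?_, fun ht => ⟨?_, ht.elim (hq ·) (hs ·)⟩⟩
  · have hqt : q ≤ t := not_lt.1 fun htq => disjoint_left.1 hp ⟨hpt, htq⟩ htS
    by_cases htr : t ≤ r
    · exact Or.inl ⟨hqt, htr⟩
    · exact Or.inr ⟨not_lt.1 fun hts => disjoint_left.1 hr ⟨not_le.1 htr, hts⟩ htS, htw⟩
  · rcases ht with ⟨h₁, h₂⟩ | ⟨h₁, h₂⟩
    · exact ⟨hpq.trans_le h₁, h₂.trans (hrs.trans hsw)⟩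
    · exact ⟨hpq.trans_le (hqr.trans (hrs.trans h₁)), h₂⟩

theorem Ico_inter_eq_Icc_union_Icc (hpq : p ≤ q) (hqr : q ≤ r) (hrs : r ≤ s) (hsw : s < w)
    (hp : Icc p q ⊆ S) (hr : Icc r s ⊆ S) (hq : Disjoint (Ioo q r) S)
    (hs : Disjoint (Ioo s w) S) : Ico p w ∩ S = Icc p q ∪ Icc r s := by
  ext t
  refine ⟨fun ⟨⟨hpt, htw⟩, htS⟩ => ?_, fun ht => ⟨?_, ht.elim (hp ·) (hr ·)⟩⟩
  · have hts : t ≤ s := not_lt.1 fun hst => disjoint_left.1 hs ⟨hst, htw⟩ htS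
    by_cases hrt : r ≤ t
    · exact Or.inr ⟨hrt, hts⟩
    · exact Or.inl ⟨hpt, not_lt.1 fun hqt => disjoint_left.1 hq ⟨hqt, not_le.1 hrt⟩ htS⟩
  · rcases ht with ⟨h₁, h₂⟩ | ⟨h₁, h₂⟩
    · exact ⟨h₁, (h₂.trans (hqr.trans hrs)).trans_lt hsw⟩
    · exact ⟨hpq.trans (hqr.trans h₁), h₂.trans_lt hsw⟩

theorem Ico_inter_inter_eq_of_Ioc_inter_of_Ico_inter (hpq : p < q) (hqr : q ≤ r) (hrs : r ≤ s)
    (hsw : s < w) (hS : Ioc p w ∩ S = Icc q r ∪ Icc s w)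
    (hT : Ico p w ∩ T = Icc p q ∪ Icc r s) (hpS : p ∈ S) :
    Ico p w ∩ (S ∩ T) = {p, q, r, s} := by
  have hS' : Icc q r ∪ Icc s w ⊆ S := fun t ht => (hS.symm.subset ht).2
  have hT' : Icc p q ∪ Icc r s ⊆ T := fun t ht => (hT.symm.subset ht).2
  ext t
  constructor
  · rintro ⟨⟨hpt, htw⟩, htS, htT⟩
    rcases hpt.eq_or_lt with rfl | hpt
    · exact Or.inl rfl
    have h₁ : t ∈ Icc q r ∪ Icc s w := hS.subset ⟨⟨hpt, htw.le⟩, htS⟩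
    have h₂ : t ∈ Icc p q ∪ Icc r s := hT.subset ⟨⟨hpt.le, htw⟩, htT⟩
    simp only [mem_union, mem_Icc, mem_insert_iff, mem_singleton_iff] at h₁ h₂ ⊢
    rcases h₁ with ⟨h₁, h₁'⟩ | ⟨h₁, h₁'⟩ <;> rcases h₂ with ⟨h₂, h₂'⟩ | ⟨h₂, h₂'⟩ <;> order
  · rintro (rfl | rfl | rfl | rfl)
    · exact ⟨⟨le_rfl, by order⟩, hpS, hT' (Or.inl ⟨le_rfl, hpq.le⟩)⟩
    · exact ⟨⟨by order, by order⟩, hS' (Or.inl ⟨le_rfl, hqr⟩), hT' (Or.inl ⟨hpq.le, le_rfl⟩)⟩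
    · exact ⟨⟨by order, by order⟩, hS' (Or.inl ⟨hqr, le_rfl⟩), hT' (Or.inr ⟨le_rfl, hrs⟩)⟩
    · exact ⟨⟨by order, by order⟩, hS' (Or.inr ⟨le_rfl, hsw.le⟩), hT' (Or.inr ⟨hrs, le_rfl⟩)⟩

end Set

end

def CosTripleNonneg (S : Set ℝ) : Prop :=
  ∀ x ∈ S, ∀ y ∈ S, ∀ z ∈ S, 0 ≤ cos (x - y) * cos (x - z) * cos (y - z)

namespace CosTripleNonneg

variable {S T : Set ℝ}

theorem exists_notMem (hS : CosTripleNonneg S) : ∃ t, t ∉ S := by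
  by_contra! h
  have hcos : cos (2 * π / 3) = -(1 / 2) := by
    rw [show 2 * π / 3 = π - π / 3 by ring, cos_pi_sub, cos_pi_div_three]
  have := hS (4 * π / 3) (h _) (2 * π / 3) (h _) 0 (h _)
  rw [show 4 * π / 3 - 2 * π / 3 = 2 * π / 3 by ring, show 2 * π / 3 - 0 = 2 * π / 3 by ring,
    show 4 * π / 3 - 0 = 2 * π - 2 * π / 3 by ring, cos_two_pi_sub, hcos] at this
  norm_num at this

theorem false_of_cos_signs (hS : CosTripleNonneg S) {x y z : ℝ} (hx : x ∈ S) (hy : y ∈ S)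
    (hz : z ∈ S) (hxy : 0 < cos (x - y)) (hxz : cos (x - z) < 0) (hyz : 0 < cos (y - z)) :
    False :=
  (hS x hx y hy z hz).not_gt (mul_neg_of_neg_of_pos (mul_neg_of_pos_of_neg hxy hxz) hyz)

theorem sub_le_pi_div_two (hS : CosTripleNonneg S) {c d : ℝ} (h : Icc c d ⊆ S) :
    d - c ≤ π / 2 := by
  by_contra! hlen
  have hπ := pi_pos
  set l := min (d - c) (3 * π / 4)
  have hl₁ : π / 2 < l := lt_min hlen (by linarith)
  have hl₂ : l ≤ 3 * π / 4 := min_le_right _ _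
  have hl₃ : l ≤ d - c := min_le_left _ _
  refine hS.false_of_cos_signs (x := c + l) (y := c + l / 2) (z := c)
    (h ⟨by linarith, by linarith⟩) (h ⟨by linarith, by linarith⟩) (h ⟨le_rfl, by linarith⟩)
    ?_ ?_ ?_
  · apply cos_pos_of_mem_Ioo; constructor <;> linarith
  · apply cos_neg_of_pi_div_two_lt_of_lt <;> linarith
  · apply cos_pos_of_mem_Ioo; constructor <;> linarith

theorem disjoint_Ioo_add_pi_div_two (hS : CosTripleNonneg S) {c d : ℝ} (h : Ioo c d ⊆ S)
    (hcd : d - c ≤ π / 2) : Disjoint (Ioo (c + π / 2) (d + π / 2)) S := by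
  refine disjoint_left.2 fun t ⟨hct, htd⟩ htS => ?_
  have hπ := pi_pos
  refine hS.false_of_cos_signs (y := (t - π / 2 + d) / 2) (z := (c + (t - π / 2)) / 2) htS
    (h ⟨by linarith, by linarith⟩) (h ⟨by linarith, by linarith⟩) ?_ ?_ ?_
  · apply cos_pos_of_mem_Ioo; constructor <;> linarith
  · apply cos_neg_of_pi_div_two_lt_of_lt <;> linarith
  · apply cos_pos_of_mem_Ioo; constructor <;> linarith

theorem midpoint_add_pi_div_two_notMem (hS : CosTripleNonneg S) {a b : ℝ} (ha : a ∈ S)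
    (hb : b ∈ S) (hab : a < b) (hba : b - a < π / 2) : (a + b) / 2 + π / 2 ∉ S := fun hm => by
  have hπ := pi_pos
  refine hS.false_of_cos_signs hm hb ha ?_ ?_ ?_
  · apply cos_pos_of_mem_Ioo; constructor <;> linarith
  · apply cos_neg_of_pi_div_two_lt_of_lt <;> linarith
  · apply cos_pos_of_mem_Ioo; constructor <;> linarith

theorem Icc_subset_and_disjoint_Ioo (hS : CosTripleNonneg S) (hSc : IsClosed S) (hTS : Tᶜ ⊆ S)
    {c d e : ℝ} (hd : d = c + π / 2) (he : e = d + π / 2) (h : Disjoint (Ioo c d) T) :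
    Icc c d ⊆ S ∧ Disjoint (Ioo d e) S := by
  have hIoo : Ioo c d ⊆ S := h.subset_compl_right.trans hTS
  have hcd : c < d := by linarith [pi_pos]
  refine ⟨by simpa only [closure_Ioo hcd.ne] using closure_minimal hIoo hSc, ?_⟩
  simpa only [← hd, ← he] using hS.disjoint_Ioo_add_pi_div_two hIoo (by linarith)

theorem eq_add_pi_div_two_of_gap (hS : CosTripleNonneg S) (hT : CosTripleNonneg T)
    (hTc : IsClosed T) (hST : Sᶜ ⊆ T) (hTS : Tᶜ ⊆ S) {a b : ℝ} (ha : a ∈ S) (hb : b ∈ S)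
    (hab : a < b) (hgap : Disjoint (Ioo a b) S) : b = a + π / 2 := by
  have hIoo : Ioo a b ⊆ T := hgap.subset_compl_right.trans hST
  have hlen : b - a ≤ π / 2 :=
    hT.sub_le_pi_div_two (by simpa only [closure_Ioo hab.ne] using closure_minimal hIoo hTc)
  have hshift : Ioo (a + π / 2) (b + π / 2) ⊆ S :=
    (hT.disjoint_Ioo_add_pi_div_two hIoo hlen).subset_compl_right.trans hTS
  by_contra hne
  have hlt : b - a < π / 2 := hlen.lt_of_ne fun h => hne (by linarith)
  exact hS.midpoint_add_pi_div_two_notMem ha hb hab hlt (hshift ⟨by linarith, by linarith⟩)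

theorem Ioc_inter_and_Ico_inter_of_gap (hS : CosTripleNonneg S) (hT : CosTripleNonneg T)
    (hSc : IsClosed S) (hTc : IsClosed T) (hST : Sᶜ ⊆ T) (hTS : Tᶜ ⊆ S)
    {a b : ℝ} (ha : a ∈ S) (hb : b ∈ S) (hab : a < b) (hgap : Disjoint (Ioo a b) S) :
    Ioc a (a + 2 * π) ∩ S = Icc (a + π / 2) (a + π) ∪ Icc (a + 3 * π / 2) (a + 2 * π) ∧
      Ico a (a + 2 * π) ∩ T = Icc a (a + π / 2) ∪ Icc (a + π) (a + 3 * π / 2) := by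
  obtain rfl := hS.eq_add_pi_div_two_of_gap hT hTc hST hTS ha hb hab hgap
  have hπ := pi_pos
  obtain ⟨hT₀, hT₁⟩ := hT.Icc_subset_and_disjoint_Ioo (e := a + π) hTc hST rfl (by ring) hgap
  obtain ⟨hS₁, hS₂⟩ := hS.Icc_subset_and_disjoint_Ioo (e := a + 3 * π / 2) hSc hTS (by ring)
    (by ring) hT₁
  obtain ⟨hT₂, hT₃⟩ := hT.Icc_subset_and_disjoint_Ioo (e := a + 2 * π) hTc hST (by ring)
    (by ring) hS₂
  obtain ⟨hS₃, -⟩ := hS.Icc_subset_and_disjoint_Ioo (e := a + 5 * π / 2) hSc hTS (by ring)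
    (by ring) hT₃
  exact ⟨Ioc_inter_eq_Icc_union_Icc (by linarith) (by linarith) (by linarith) (by linarith)
      hS₁ hS₃ hgap hS₂,
    Ico_inter_eq_Icc_union_Icc (by linarith) (by linarith) (by linarith) (by linarith)
      hT₀ hT₂ hT₁ hT₃⟩

end CosTripleNonneg

theorem inner_circlePt (x y : ℝ) : inner ℝ (circlePt x) (circlePt y) = cos (x - y) := by
  simp only [circlePt, WithLp.equiv_symm_apply, PiLp.inner_apply, RCLike.inner_apply,
    ringHom_apply, Fin.sum_univ_two, Matrix.cons_val_zero, Matrix.cons_val_one, cos_sub]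
  ring

theorem norm_circlePt (θ : ℝ) : ‖circlePt θ‖ = 1 := by
  simp [circlePt, EuclideanSpace.norm_eq, Fin.sum_univ_two]

theorem continuous_circlePt : Continuous circlePt :=
  (PiLp.continuous_toLp 2 _).comp <| continuous_pi <| Fin.forall_fin_two.2
    ⟨by simpa using continuous_cos, by simpa using continuous_sin⟩

theorem circlePt_periodic : Function.Periodic circlePt (2 * π) := fun θ => by
  simp only [circlePt, cos_add_two_pi, sin_add_two_pi]

theorem range_circlePt : range circlePt = {x | ‖x‖ = 1} := by
  refine (range_subset_iff.2 norm_circlePt).antisymm fun x hx => ?_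
  set e := Complex.orthonormalBasisOneI.repr
  have hz : ‖e.symm x‖ = 1 := (e.symm.norm_map x).trans hx
  refine ⟨(e.symm x).arg, e.symm.injective ?_⟩
  have h := Complex.norm_mul_cos_add_sin_mul_I (e.symm x)
  rw [hz, Complex.ofReal_one, one_mul] at h
  simpa [e, circlePt] using h

theorem image_Ico_circlePt (a : ℝ) : circlePt '' Ico a (a + 2 * π) = range circlePt :=
  (image_subset_range _ _).antisymm <| range_subset_iff.2 fun θ =>
    let ⟨t, ht, hθt⟩ := circlePt_periodic.exists_mem_Ico two_pi_pos θ a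
    ⟨t, ht, hθt.symm⟩

theorem image_inter_preimage_circlePt {I : Set ℝ} (hI : circlePt '' I = range circlePt)
    {B : Set (EuclideanSpace ℝ (Fin 2))} (hB : B ⊆ {x | ‖x‖ = 1}) :
    circlePt '' (I ∩ circlePt ⁻¹' B) = B := by
  rw [image_inter_preimage, hI, range_circlePt, inter_eq_right.2 hB]

theorem image_circlePt_add (φ : ℝ) (J : Set ℝ) :
    (fun θ => circlePt (θ + φ)) '' J = circlePt '' ((φ + ·) '' J) := by
  simp only [image_image, add_comm φ]

theorem exists_Ioo_disjoint_preimage_circlePt {B : Set (EuclideanSpace ℝ (Fin 2))}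
    (hB : IsClosed B) {τ θ : ℝ} (hτ : circlePt τ ∉ B) (hθ : circlePt θ ∈ B) :
    ∃ a b, a ∈ circlePt ⁻¹' B ∧ b ∈ circlePt ⁻¹' B ∧ a < b ∧
      Disjoint (Ioo a b) (circlePt ⁻¹' B) := by
  obtain ⟨x, ⟨-, hxτ⟩, hθx⟩ := circlePt_periodic.exists_mem_Ioc two_pi_pos θ (τ - 2 * π)
  obtain ⟨y, ⟨hτy, -⟩, hθy⟩ := circlePt_periodic.exists_mem_Ico two_pi_pos θ τ
  exact (hB.preimage continuous_circlePt).exists_Ioo_disjoint (x := x) (y := y)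
    (by rwa [mem_preimage, ← hθx]) (by rwa [mem_preimage, ← hθy]) (by linarith) hτy hτ

theorem stmt_3 (B : Fin 2 → Set (EuclideanSpace ℝ (Fin 2)))
    (hsub : ∀ i, B i ⊆ {x : EuclideanSpace ℝ (Fin 2) | ‖x‖ = 1})
    (hclosed : ∀ i, IsClosed (B i))
    (hcover : B 0 ∪ B 1 = {x : EuclideanSpace ℝ (Fin 2) | ‖x‖ = 1})
    (hloc : ∀ i, ∀ u ∈ B i, ∀ v ∈ B i, ∀ w ∈ B i,
      (inner ℝ u v : ℝ) * (inner ℝ u w : ℝ) * (inner ℝ v w : ℝ) ≥ 0) :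
    ∃ φ : ℝ,
      B 0 = (fun θ => circlePt (θ + φ)) '' (Set.Icc (π/2) π ∪ Set.Icc (3*π/2) (2*π)) ∧
      B 1 = (fun θ => circlePt (θ + φ)) '' (Set.Icc 0 (π/2) ∪ Set.Icc π (3*π/2)) ∧
      B 0 ∩ B 1 = {circlePt φ, circlePt (φ + π/2), circlePt (φ + π), circlePt (φ + 3*π/2)} := by
  set S : Fin 2 → Set ℝ := fun i => circlePt ⁻¹' B i
  have hS i : CosTripleNonneg (S i) := fun x hx y hy z hz => by
    simpa only [inner_circlePt] using hloc i _ hx _ hy _ hz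
  have hSc i : IsClosed (S i) := (hclosed i).preimage continuous_circlePt
  have hcov t : t ∈ S 0 ∪ S 1 := (hcover.symm ▸ norm_circlePt t : circlePt t ∈ B 0 ∪ B 1)
  have h01 : (S 0)ᶜ ⊆ S 1 := fun t ht => (hcov t).resolve_left ht
  have h10 : (S 1)ᶜ ⊆ S 0 := fun t ht => (hcov t).resolve_right ht
  obtain ⟨τ, hτ⟩ := (hS 0).exists_notMem
  obtain ⟨θ, hθ⟩ := (hS 1).exists_notMem
  obtain ⟨a, b, ha, hb, hab, hgap⟩ :=
    exists_Ioo_disjoint_preimage_circlePt (hclosed 0) hτ (h10 hθ)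
  obtain ⟨h0, h1⟩ :=
    (hS 0).Ioc_inter_and_Ico_inter_of_gap (hS 1) (hSc 0) (hSc 1) h01 h10 ha hb hab hgap
  have hπ := pi_pos
  refine ⟨a, ?_, ?_, ?_⟩
  · rw [image_circlePt_add, image_union, image_const_add_Icc, image_const_add_Icc, ← h0,
      image_inter_preimage_circlePt (circlePt_periodic.image_Ioc two_pi_pos a) (hsub 0)]
  · rw [image_circlePt_add, image_union, image_const_add_Icc, image_const_add_Icc, add_zero,
      ← h1, image_inter_preimage_circlePt (image_Ico_circlePt a) (hsub 1)]
  · rw [← image_inter_preimage_circlePt (image_Ico_circlePt a)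
        (inter_subset_left.trans (hsub 0)), preimage_inter,
      Ico_inter_inter_eq_of_Ioc_inter_of_Ico_inter (by linarith) (by linarith) (by linarith)
        (by linarith) h0 h1 ha]
    simp only [image_insert_eq, image_singleton]
end

section
/- Let G be the graph on the 13 unit vectors obtained by normalizing (1,0,0), (0,1,0), (0,0,1), (0,1,1), (1,0,1), (1,1,0), (0,1,−1), (1,0,−1), (1,−1,0), (−1,1,1), (1,−1,1), (1,1,−1), (1,1,1), where two vectors are adjacent if and only if they are orthogonal. Then the chromatic number of G is exactly 4. -/
/-!
The basis vectors `0, 1, 2` form a triangle, so a 3-coloring may be normalized to color them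
`0, 1, 2`. Each of the edges `{3, 6}`, `{4, 7}`, `{5, 8}` is orthogonal to one basis vector and so
carries exactly the two colors missing there. The vertices `9, …, 12` are adjacent to those
transversals of these three edges that contain an odd number of the vertices `6, 7, 8`. Exactly
two transversals are rainbow, and they are complementary, so one of them has odd parity: some
vertex among `9, …, 12` sees all three colors.
-/

/-- The 13 vectors of DeCorte's configuration. -/
def ksVecs : Fin 13 → Fin 3 → ℝ :=
  ![![1,0,0], ![0,1,0], ![0,0,1],
    ![0,1,1], ![1,0,1], ![1,1,0],
    ![0,1,-1], ![1,0,-1], ![1,-1,0],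
    ![-1,1,1], ![1,-1,1], ![1,1,-1],
    ![1,1,1]]

/-- The orthogonality graph on the 13 vectors. -/
def ksGraph : SimpleGraph (Fin 13) where
  Adj i j := i ≠ j ∧ ∑ k, ksVecs i k * ksVecs j k = 0
  symm := ⟨fun i j h => ⟨h.1.symm, by
    rw [← h.2]; exact Finset.sum_congr rfl fun k _ => mul_comm _ _⟩⟩
  loopless := ⟨fun i h => h.1 rfl⟩

open Function SimpleGraph

def orthogonalityGraph {V ι R : Type*} [Fintype ι] [CommSemiring R] (v : V → ι → R) :
    SimpleGraph V where
  Adj i j := i ≠ j ∧ v i ⬝ᵥ v j = 0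
  symm := ⟨fun _ _ h => ⟨h.1.symm, dotProduct_comm (v _) (v _) ▸ h.2⟩⟩
  loopless := ⟨fun _ h => h.1 rfl⟩

instance {V ι R : Type*} [Fintype ι] [CommSemiring R] [DecidableEq V] [DecidableEq R]
    (v : V → ι → R) : DecidableRel (orthogonalityGraph v).Adj :=
  fun _ _ => inferInstanceAs (Decidable (_ ≠ _ ∧ _ = 0))

theorem orthogonalityGraph_comp_of_injective {V ι R S : Type*} [Fintype ι] [CommRing R]
    [CommRing S] (f : R →+* S) (hf : Injective f) (v : V → ι → R) :
    orthogonalityGraph (fun i => f ∘ v i) = orthogonalityGraph v := by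
  ext i j
  simp only [orthogonalityGraph, ← RingHom.map_dotProduct, map_eq_zero_iff f hf]

theorem SimpleGraph.Coloring.not_injective_comp_of_forall_adj {V : Type*} {G : SimpleGraph V}
    {n : ℕ} (C : G.Coloring (Fin n)) {w : V} {x : Fin n → V} (hx : ∀ i, G.Adj w (x i)) :
    ¬ Injective (C ∘ x) := fun hinj =>
  let ⟨i, hi⟩ := Finite.injective_iff_surjective.mp hinj (C w)
  C.valid (hx i) hi.symm

theorem SimpleGraph.Colorable.exists_coloring_comp_eq {V : Type*} {G : SimpleGraph V} {n : ℕ}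
    (hG : G.Colorable n) {x : Fin n → V} (hx : Pairwise fun i j => G.Adj (x i) (x j)) :
    ∃ C : G.Coloring (Fin n), ∀ i, C (x i) = i := by
  obtain ⟨C⟩ := hG
  have hinj : Injective (C ∘ x) := fun i j hij => by_contra fun hne => C.valid (hx hne) hij
  let σ := Equiv.ofBijective _ (Finite.injective_iff_bijective.mp hinj)
  exact ⟨(Embedding.completeGraph σ.symm.toEmbedding).toHom.comp C, σ.symm_apply_apply⟩

def ksVecsInt : Fin 13 → Fin 3 → ℤ :=
  ![![1,0,0], ![0,1,0], ![0,0,1],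
    ![0,1,1], ![1,0,1], ![1,1,0],
    ![0,1,-1], ![1,0,-1], ![1,-1,0],
    ![-1,1,1], ![1,-1,1], ![1,1,-1],
    ![1,1,1]]

theorem ksGraph_eq : ksGraph = orthogonalityGraph ksVecsInt := by
  have hvecs : ksVecs = fun i => Int.castRingHom ℝ ∘ ksVecsInt i := by
    funext i k
    fin_cases i <;> fin_cases k <;> simp [ksVecs, ksVecsInt]
  rw [← orthogonalityGraph_comp_of_injective (Int.castRingHom ℝ) Int.cast_injective, ← hvecs]
  rfl

theorem ksGraph_colorable_four : ksGraph.Colorable 4 := by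
  rw [ksGraph_eq]
  exact ⟨Coloring.mk ![0,1,2,1,0,0,2,2,1,1,3,2,0] (by decide)⟩

theorem exists_rainbow_odd_transversal : ∀ a a' b b' d d' : Fin 3,
    a ≠ 0 → a' ≠ 0 → a ≠ a' → b ≠ 1 → b' ≠ 1 → b ≠ b' → d ≠ 2 → d' ≠ 2 → d ≠ d' →
    Injective ![b, d, a'] ∨ Injective ![a, d, b'] ∨ Injective ![a, b, d'] ∨
      Injective ![a', b', d'] := by
  decide

theorem ksGraph_not_colorable_three : ¬ ksGraph.Colorable 3 := by
  rw [ksGraph_eq]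
  intro h
  obtain ⟨C, hC⟩ := h.exists_coloring_comp_eq (x := ![0, 1, 2]) (by unfold Pairwise; decide)
  have h0 : C 0 = 0 := hC 0
  have h1 : C 1 = 1 := hC 1
  have h2 : C 2 = 2 := hC 2
  have hne {i j : Fin 13} (hij : (orthogonalityGraph ksVecsInt).Adj i j := by decide) :
      C i ≠ C j := C.valid hij
  have not_rainbow (w x y z : Fin 13)
      (hx : ∀ k, (orthogonalityGraph ksVecsInt).Adj w (![x, y, z] k) := by decide) :
      ¬ Injective ![C x, C y, C z] := by
    have hcomp : ![C x, C y, C z] = C ∘ ![x, y, z] := by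
      funext k
      fin_cases k <;> rfl
    exact hcomp ▸ C.not_injective_comp_of_forall_adj hx
  rcases exists_rainbow_odd_transversal (C 3) (C 6) (C 4) (C 7) (C 5) (C 8)
    (h0 ▸ hne) (h0 ▸ hne) hne (h1 ▸ hne) (h1 ▸ hne) hne (h2 ▸ hne) (h2 ▸ hne) hne with
    h | h | h | h
  · exact absurd h (not_rainbow 9 4 5 6)
  · exact absurd h (not_rainbow 10 3 5 7)
  · exact absurd h (not_rainbow 11 3 4 8)
  · exact absurd h (not_rainbow 12 6 7 8)

theorem stmt_4 : ksGraph.chromaticNumber = 4 :=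
  chromaticNumber_eq_iff_colorable_not_colorable.mpr
    ⟨ksGraph_colorable_four, ksGraph_not_colorable_three⟩
end

section
/- Let G be the graph on the 13 vectors (1,0,0), (0,1,0), (0,0,1), (0,1,1), (1,0,1), (1,1,0), (0,1,−1), (1,0,−1), (1,−1,0), (−1,1,1), (1,−1,1), (1,1,−1), (1,1,1) in ℝ³, with adjacency given by orthogonality (u·v = 0). Then G has no proper 3-coloring. -/
theorem List.Nodup.mem_of_length_eq_card {α : Type*} [Fintype α] [DecidableEq α] {l : List α}
    (hl : l.Nodup) (hlen : l.length = Fintype.card α) (a : α) : a ∈ l := by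
  have huniv : l.toFinset = Finset.univ :=
    Finset.eq_univ_of_card _ ((List.toFinset_card_of_nodup hl).trans hlen)
  exact List.mem_toFinset.mp (huniv ▸ Finset.mem_univ a)

/- Relabeling the colors as `ZMod 3` with `aᵢ = i`, the pair `{bᵢ, cᵢ}` is `{i + sᵢ, i - sᵢ}` for a
sign `sᵢ`, and a transversal `i + εᵢ` (`εᵢ = ±1`) is rainbow iff `ε₀ = ε₁ = ε₂`. The four
transversals below have `ε = (±s₀, ±s₁, ±s₂)` with an odd number of `-` signs, i.e. they are all
sign vectors with product `-s₀s₁s₂`, and one of them is constant. -/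
theorem nodup_odd_transversal_fin_three {a₀ a₁ a₂ b₀ b₁ b₂ c₀ c₁ c₂ : Fin 3}
    (ha : [a₀, a₁, a₂].Nodup) (h₀ : [a₀, b₀, c₀].Nodup) (h₁ : [a₁, b₁, c₁].Nodup)
    (h₂ : [a₂, b₂, c₂].Nodup) :
    [c₀, b₁, b₂].Nodup ∨ [b₀, c₁, b₂].Nodup ∨ [b₀, b₁, c₂].Nodup ∨ [c₀, c₁, c₂].Nodup := by
  revert a₀ a₁ a₂ b₀ b₁ b₂ c₀ c₁ c₂
  decide

theorem stmt_5 :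
    ¬ ∃ c : Fin 13 → Fin 3, ∀ i j : Fin 13,
      (∑ k, ksVecs i k * ksVecs j k) = 0 → i ≠ j → c i ≠ c j := by
  rintro ⟨c, hc⟩
  have ne (i j : Fin 13) (hij : i ≠ j := by decide)
      (h : ∑ k, ksVecs i k * ksVecs j k = 0 := by simp [ksVecs, Fin.sum_univ_three]) :
      c i ≠ c j :=
    hc i j h hij
  have triangle {i j k : Fin 13} (hij : c i ≠ c j) (hik : c i ≠ c k) (hjk : c j ≠ c k) :
      [c i, c j, c k].Nodup := by
    simp [hij, hik, hjk]
  have no_color {v i j k : Fin 13} (hi : c v ≠ c i) (hj : c v ≠ c j) (hk : c v ≠ c k)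
      (h : [c i, c j, c k].Nodup) : False := by
    simpa [hi, hj, hk] using h.mem_of_length_eq_card rfl (c v)
  rcases nodup_odd_transversal_fin_three (triangle (ne 0 1) (ne 0 2) (ne 1 2))
      (triangle (ne 0 3) (ne 0 6) (ne 3 6)) (triangle (ne 1 4) (ne 1 7) (ne 4 7))
      (triangle (ne 2 5) (ne 2 8) (ne 5 8)) with h | h | h | h
  · exact no_color (ne 9 6) (ne 9 4) (ne 9 5) h
  · exact no_color (ne 10 3) (ne 10 7) (ne 10 5) h
  · exact no_color (ne 11 3) (ne 11 4) (ne 11 8) h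
  · exact no_color (ne 12 6) (ne 12 7) (ne 12 8) h
end

section
/- If S² = E₁ ∪ E₂ ∪ E₃ ∪ E₄ is an orthogonal 4-coloring of the unit sphere, then there is no great circle of S² that intersects all four color classes. -/
theorem stmt_7_general (E : Fin 4 → Set (EuclideanSpace ℝ (Fin 3)))
    (hunion : (⋃ i, E i) = {x : EuclideanSpace ℝ (Fin 3) | ‖x‖ = 1})
    (horth : ∀ i, ∀ u ∈ E i, ∀ v ∈ E i, (inner ℝ u v : ℝ) ≠ 0) :
    ¬ ∃ n : EuclideanSpace ℝ (Fin 3), ‖n‖ = 1 ∧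
      ∀ i, ∃ x ∈ E i, (inner ℝ x n : ℝ) = 0 := by
  rintro ⟨n, hn, hmeets⟩
  obtain ⟨i, hni⟩ := Set.mem_iUnion.mp (hunion ▸ hn : n ∈ ⋃ i, E i)
  obtain ⟨x, hxi, hxn⟩ := hmeets i
  exact horth i x hxi n hni hxn

theorem stmt_7 (E : Fin 4 → Set (EuclideanSpace ℝ (Fin 3)))
    (hunion : (⋃ i, E i) = {x : EuclideanSpace ℝ (Fin 3) | ‖x‖ = 1})
    (hdisj : ∀ i j, i ≠ j → Disjoint (E i) (E j))
    (hne : ∀ i, (E i).Nonempty)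
    (horth : ∀ i, ∀ u ∈ E i, ∀ v ∈ E i, (inner ℝ u v : ℝ) ≠ 0) :
    ¬ ∃ n : EuclideanSpace ℝ (Fin 3), ‖n‖ = 1 ∧
      ∀ i, ∃ x ∈ E i, (inner ℝ x n : ℝ) = 0 :=
  stmt_7_general E hunion horth
end

section
/- Let ν be a non-Archimedean absolute value on ℝ extending the 2-adic absolute value on ℚ. Define Xᵢ = {x ∈ S² : ν(xᵢ) > ν(x_k) for all k ≠ i} for i = 1, 2, 3. Then no Xᵢ contains a pair of orthogonal points: if u, v ∈ Xᵢ then u·v ≠ 0. -/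
/-! In `u · v = ∑ₖ uₖ vₖ` the term `uᵢ vᵢ` is strictly larger under `ν` than every other term,
so by the ultrametric inequality `ν (u · v) = ν uᵢ · ν vᵢ`, which is positive. -/

def AbsoluteValue.ofIsNonarchimedean {R S : Type*} [Semiring R] [Semiring S] [LinearOrder S]
    [IsStrictOrderedRing S] (f : R → S) (nonneg : ∀ a, 0 ≤ f a)
    (map_mul : ∀ a b, f (a * b) = f a * f b) (eq_zero : ∀ a, f a = 0 ↔ a = 0)
    (hf : IsNonarchimedean f) : AbsoluteValue R S where
  toFun := f
  map_mul' := map_mul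
  nonneg' := nonneg
  eq_zero' := eq_zero
  add_le' _ _ := hf.add_le nonneg

namespace AbsoluteValue

variable {R S ι : Type*} [CommRing R] [CommRing S] [LinearOrder S] [IsStrictOrderedRing S]
  [Fintype ι] {v : AbsoluteValue R S} {u w : ι → R} {i : ι}

theorem apply_sum_mul_eq_of_lt (hv : IsNonarchimedean v)
    (hu : ∀ k ≠ i, v (u k) < v (u i)) (hw : ∀ k ≠ i, v (w k) < v (w i)) :
    v (∑ k, u k * w k) = v (u i) * v (w i) := by
  rw [← map_mul]
  refine hv.apply_sum_eq_of_lt (fun a ↦ (v.map_neg a).symm) (Finset.mem_univ i) fun k _ hk ↦ ?_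
  rw [map_mul, map_mul]
  exact mul_lt_mul'' (hu k hk) (hw k hk) (v.nonneg _) (v.nonneg _)

theorem sum_mul_ne_zero_of_lt [Nontrivial ι] (hv : IsNonarchimedean v)
    (hu : ∀ k ≠ i, v (u k) < v (u i)) (hw : ∀ k ≠ i, v (w k) < v (w i)) :
    ∑ k, u k * w k ≠ 0 := by
  obtain ⟨k, hk⟩ := exists_ne i
  have hui : u i ≠ 0 := v.pos_iff.mp ((v.nonneg _).trans_lt (hu k hk))
  have hwi : w i ≠ 0 := v.pos_iff.mp ((v.nonneg _).trans_lt (hw k hk))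
  rw [← v.ne_zero_iff, apply_sum_mul_eq_of_lt hv hu hw]
  exact mul_ne_zero (v.ne_zero hui) (v.ne_zero hwi)

end AbsoluteValue

theorem stmt_15_general (ν : ℝ → ℝ)
    (hnn : ∀ a, 0 ≤ ν a)
    (hmul : ∀ a b, ν (a * b) = ν a * ν b)
    (hadd : ∀ a b, ν (a + b) ≤ max (ν a) (ν b))
    (hzero : ∀ a, ν a = 0 ↔ a = 0)
    (X : Fin 3 → Set (EuclideanSpace ℝ (Fin 3)))
    (hX : ∀ i, X i = {x | ‖x‖ = 1 ∧ ∀ k, k ≠ i → ν (x i) > ν (x k)}) :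
    ∀ i, ∀ u ∈ X i, ∀ v ∈ X i, (inner ℝ u v : ℝ) ≠ 0 := by
  intro i u hu v hv
  rw [hX i] at hu hv
  have hinner : (inner ℝ u v : ℝ) = ∑ k, u k * v k := by
    simp [PiLp.inner_apply, mul_comm]
  rw [hinner]
  exact AbsoluteValue.sum_mul_ne_zero_of_lt
    (v := AbsoluteValue.ofIsNonarchimedean ν hnn hmul hzero hadd) hadd hu.2 hv.2

theorem stmt_15 (ν : ℝ → ℝ)
    (hnn : ∀ a, 0 ≤ ν a)
    (hmul : ∀ a b, ν (a * b) = ν a * ν b)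
    (hadd : ∀ a b, ν (a + b) ≤ max (ν a) (ν b))
    (hzero : ∀ a, ν a = 0 ↔ a = 0)
    (hext : ∀ q : ℚ, ν (q : ℝ) = (padicNorm 2 q : ℝ))
    (X : Fin 3 → Set (EuclideanSpace ℝ (Fin 3)))
    (hX : ∀ i, X i = {x | ‖x‖ = 1 ∧ ∀ k, k ≠ i → ν (x i) > ν (x k)}) :
    ∀ i, ∀ u ∈ X i, ∀ v ∈ X i, (inner ℝ u v : ℝ) ≠ 0 :=
  stmt_15_general ν hnn hmul hadd hzero X hX
end

section
/- If E₁, E₂, E₃, E₄ is an octahedral 4-coloring of S² with respect to a regular octahedron given by an orthonormal basis u₁, u₂, u₃ (each color class octahedral with respect to the same octahedron), then each color class is locally octahedral: (u·v)(u·w)(v·w) ≥ 0 for all u, v, w in the same class. -/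
/-!
In the coordinates `ε k * ⟪x, u k⟫` the inner product is the dot product, and an octahedral
class consists of vectors whose coordinates all have one sign. Reversing a vector negates two
of the three factors `⟪a, b⟫ ⟪a, c⟫ ⟪b, c⟫`, so one may assume all coordinates nonnegative,
and then each factor is nonnegative.
-/

open Module

theorem exists_sign_smul_nonneg {ι : Type*} {p : ι → ℝ} (hp : 0 ≤ p ∨ p ≤ 0) :
    ∃ s : ℝ, s * s = 1 ∧ ∃ q, 0 ≤ q ∧ p = s • q := by
  rcases hp with hp | hp
  · exact ⟨1, by norm_num, p, hp, by simp⟩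
  · exact ⟨-1, by norm_num, -p, neg_nonneg.mpr hp, by simp⟩

theorem dotProduct_mul_dotProduct_mul_dotProduct_nonneg {ι : Type*} [Fintype ι]
    {p q r : ι → ℝ} (hp : 0 ≤ p ∨ p ≤ 0) (hq : 0 ≤ q ∨ q ≤ 0) (hr : 0 ≤ r ∨ r ≤ 0) :
    0 ≤ (p ⬝ᵥ q) * (p ⬝ᵥ r) * (q ⬝ᵥ r) := by
  obtain ⟨s, hs, p₀, hp₀, rfl⟩ := exists_sign_smul_nonneg hp
  obtain ⟨t, ht, q₀, hq₀, rfl⟩ := exists_sign_smul_nonneg hq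
  obtain ⟨w, hw, r₀, hr₀, rfl⟩ := exists_sign_smul_nonneg hr
  have hsign : s * t * (s * w) * (t * w) = 1 := by
    linear_combination (t * t * (w * w)) * hs + (w * w) * ht + hw
  have hpq := dotProduct_nonneg_of_nonneg hp₀ hq₀
  have hpr := dotProduct_nonneg_of_nonneg hp₀ hr₀
  have hqr := dotProduct_nonneg_of_nonneg hq₀ hr₀
  simp only [smul_dotProduct, dotProduct_smul, smul_eq_mul]
  calc 0 ≤ (p₀ ⬝ᵥ q₀) * (p₀ ⬝ᵥ r₀) * (q₀ ⬝ᵥ r₀) := by positivity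
    _ = _ := by linear_combination (-(p₀ ⬝ᵥ q₀) * (p₀ ⬝ᵥ r₀) * (q₀ ⬝ᵥ r₀)) * hsign

theorem Orthonormal.real_inner_eq_sum_inner_mul_inner {ι E : Type*} [Fintype ι] [Nonempty ι]
    [NormedAddCommGroup E] [InnerProductSpace ℝ E] {u : ι → E} (hu : Orthonormal ℝ u)
    (hcard : Fintype.card ι = finrank ℝ E) (x y : E) :
    inner ℝ x y = ∑ k, inner ℝ x (u k) * inner ℝ y (u k) := by
  let b := (basisOfOrthonormalOfCardEqFinrank hu hcard).toOrthonormalBasis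
    (by rwa [coe_basisOfOrthonormalOfCardEqFinrank])
  have hb : ∀ k, b k = u k := fun k => by
    simp [b, Module.Basis.coe_toOrthonormalBasis, coe_basisOfOrthonormalOfCardEqFinrank]
  simp only [← b.sum_inner_mul_inner x y, hb, real_inner_comm (u _) y]

theorem stmt_18_general (u : Fin 3 → EuclideanSpace ℝ (Fin 3))
    (hu : Orthonormal ℝ u)
    (E : Fin 4 → Set (EuclideanSpace ℝ (Fin 3)))
    (hoct : ∀ i, ∃ ε : Fin 3 → ℝ, (∀ k, ε k = 1 ∨ ε k = -1) ∧
      ∀ x ∈ E i, (∀ k, 0 ≤ ε k * (inner ℝ x (u k) : ℝ)) ∨ (∀ k, ε k * (inner ℝ x (u k) : ℝ) ≤ 0)) :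
    ∀ i, ∀ a ∈ E i, ∀ b ∈ E i, ∀ c ∈ E i,
      (inner ℝ a b : ℝ) * (inner ℝ a c : ℝ) * (inner ℝ b c : ℝ) ≥ 0 := by
  intro i a ha b hb c hc
  obtain ⟨ε, hε, hclass⟩ := hoct i
  let σ (x : EuclideanSpace ℝ (Fin 3)) : Fin 3 → ℝ := fun k => ε k * inner ℝ x (u k)
  have hinner (x y : EuclideanSpace ℝ (Fin 3)) : inner ℝ x y = σ x ⬝ᵥ σ y := by
    rw [hu.real_inner_eq_sum_inner_mul_inner (by simp)]
    refine Finset.sum_congr rfl fun k _ => ?_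
    have : ε k * ε k = 1 := by rcases hε k with h | h <;> simp [h]
    linear_combination (-(inner ℝ x (u k)) * inner ℝ y (u k)) * this
  have hσ (x) (hx : x ∈ E i) : 0 ≤ σ x ∨ σ x ≤ 0 := hclass x hx
  rw [hinner a b, hinner a c, hinner b c]
  exact dotProduct_mul_dotProduct_mul_dotProduct_nonneg (hσ a ha) (hσ b hb) (hσ c hc)

theorem stmt_18 (u : Fin 3 → EuclideanSpace ℝ (Fin 3))
    (hu : Orthonormal ℝ u)
    (E : Fin 4 → Set (EuclideanSpace ℝ (Fin 3)))
    (hunion : (⋃ i, E i) = {x : EuclideanSpace ℝ (Fin 3) | ‖x‖ = 1})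
    (hdisj : ∀ i j, i ≠ j → Disjoint (E i) (E j))
    (hne : ∀ i, (E i).Nonempty)
    (hoct : ∀ i, ∃ ε : Fin 3 → ℝ, (∀ k, ε k = 1 ∨ ε k = -1) ∧
      ∀ x ∈ E i, (∀ k, 0 ≤ ε k * (inner ℝ x (u k) : ℝ)) ∨ (∀ k, ε k * (inner ℝ x (u k) : ℝ) ≤ 0)) :
    ∀ i, ∀ a ∈ E i, ∀ b ∈ E i, ∀ c ∈ E i,
      (inner ℝ a b : ℝ) * (inner ℝ a c : ℝ) * (inner ℝ b c : ℝ) ≥ 0 :=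
  stmt_18_general u hu E hoct
end

section
/- Suppose n₁, n₂, n₃ are unit vectors in ℝ³ that are linearly dependent. Then there exists a unit vector n such that the great circle {x ∈ S² : x·n = 0} meets the interior of every one of the (open) regions into which the three great circles with normals n₁, n₂, n₃ divide S²; equivalently, there is a great circle intersecting every connected component of S² \ (γ₁ ∪ γ₂ ∪ γ₃), where γᵢ = {x ∈ S² : x·nᵢ = 0}. -/
/-!
The normals `nᵢ` span a proper subspace, so some unit vector `p` is orthogonal to all of them.
Pushing a point `x` of a region towards the great circle `p⊥` along the great circle through `x`
and `p`, i.e. normalizing `x - t • (⟪x, p⟫ / ⟪p, p⟫) • p` for `t` from `0` to `1`, leaves every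
`⟪·, nᵢ⟫` unchanged up to a positive factor. So the path stays in the region of `x`, and it ends
on the great circle `p⊥`.
-/

open Module RealInnerProductSpace

theorem Submodule.exists_norm_eq_one_mem_orthogonal {𝕜 E : Type*} [RCLike 𝕜]
    [NormedAddCommGroup E] [InnerProductSpace 𝕜 E] {K : Submodule 𝕜 E}
    [K.HasOrthogonalProjection] (hK : K ≠ ⊤) : ∃ p ∈ Kᗮ, ‖p‖ = 1 := by
  obtain ⟨p, hpK, hp⟩ := (Submodule.ne_bot_iff _).mp (mt Submodule.orthogonal_eq_bot_iff.mp hK)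
  exact ⟨(‖p‖⁻¹ : 𝕜) • p, Kᗮ.smul_mem _ hpK, norm_smul_inv_norm hp⟩

variable {E : Type*} [NormedAddCommGroup E] [InnerProductSpace ℝ E]

theorem exists_norm_eq_one_forall_inner_eq_zero_of_not_linearIndependent [FiniteDimensional ℝ E]
    {ι : Type*} [Fintype ι] {v : ι → E} (hcard : Fintype.card ι = finrank ℝ E)
    (hv : ¬ LinearIndependent ℝ v) : ∃ p : E, ‖p‖ = 1 ∧ ∀ i, ⟪v i, p⟫ = 0 := by
  have hspan : Submodule.span ℝ (Set.range v) ≠ ⊤ := fun h =>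
    hv (linearIndependent_of_top_le_span_of_card_eq_finrank h.ge hcard)
  obtain ⟨p, hpK, hp⟩ := Submodule.exists_norm_eq_one_mem_orthogonal hspan
  exact ⟨p, hp, fun i => (Submodule.mem_orthogonal _ p).mp hpK _ (Submodule.subset_span ⟨i, rfl⟩)⟩

def sphereOffHyperplanes {ι : Type*} (n : ι → E) : Set E :=
  {x | ‖x‖ = 1 ∧ ∀ i, ⟪x, n i⟫ ≠ 0}

section sphereOffHyperplanes

variable {ι : Type*} [Nonempty ι] {n : ι → E}

theorem inv_norm_smul_mem_sphereOffHyperplanes {g : E} (hg : ∀ i, ⟪g, n i⟫ ≠ 0) :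
    ‖g‖⁻¹ • g ∈ sphereOffHyperplanes n := by
  have hg0 : g ≠ 0 := by
    rintro rfl
    exact hg (Classical.arbitrary ι) (inner_zero_left _)
  refine ⟨norm_smul_inv_norm (𝕜 := ℝ) hg0, fun i => ?_⟩
  rw [real_inner_smul_left]
  exact mul_ne_zero (inv_ne_zero (norm_ne_zero_iff.mpr hg0)) (hg i)

theorem exists_mem_connectedComponentIn_sphereOffHyperplanes_inner_eq_zero {p : E}
    (hpn : ∀ i, ⟪n i, p⟫ = 0) {x : E} (hx : x ∈ sphereOffHyperplanes n) :
    ∃ y ∈ connectedComponentIn (sphereOffHyperplanes n) x, ⟪y, p⟫ = 0 := by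
  set g : ℝ → E := fun t => x - (t * (⟪x, p⟫ / ⟪p, p⟫)) • p
  have hg_inner : ∀ t i, ⟪g t, n i⟫ = ⟪x, n i⟫ := fun t i => by
    rw [inner_sub_left, real_inner_smul_left, ← real_inner_comm p (n i), hpn i, mul_zero, sub_zero]
  have hg_ne : ∀ t, g t ≠ 0 := fun t h0 => by
    have := hg_inner t (Classical.arbitrary ι)
    rw [h0, inner_zero_left] at this
    exact hx.2 _ this.symm
  set f : ℝ → E := fun t => ‖g t‖⁻¹ • g t
  have hf : Continuous f := by
    have hg : Continuous g := by fun_prop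
    exact (hg.norm.inv₀ fun t => norm_ne_zero_iff.mpr (hg_ne t)).smul hg
  have hf_mem : ∀ t, f t ∈ sphereOffHyperplanes n := fun t =>
    inv_norm_smul_mem_sphereOffHyperplanes fun i => (hg_inner t i).symm ▸ hx.2 i
  have hf_zero : f 0 = x := by simp [f, g, hx.1]
  have hrange : Set.range f ⊆ connectedComponentIn (sphereOffHyperplanes n) x :=
    (isPreconnected_range hf).subset_connectedComponentIn ⟨0, hf_zero⟩
      (Set.range_subset_iff.mpr hf_mem)
  refine ⟨f 1, hrange ⟨1, rfl⟩, ?_⟩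
  -- if `⟪p, p⟫ = 0` then `p = 0`, and the junk value `⟪x, p⟫ / 0 = 0` is harmless
  have hp : ⟪x, p⟫ / ⟪p, p⟫ * ⟪p, p⟫ = ⟪x, p⟫ := div_mul_cancel_of_imp fun h => by
    rw [inner_self_eq_zero.mp h, inner_zero_right]
  simp only [f, g, real_inner_smul_left, inner_sub_left, one_mul, hp, sub_self, mul_zero]

end sphereOffHyperplanes

theorem stmt_19_general (n : Fin 3 → EuclideanSpace ℝ (Fin 3))
    (hdep : ¬ LinearIndependent ℝ n)
    (U : Set (EuclideanSpace ℝ (Fin 3)))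
    (hU : U = {x : EuclideanSpace ℝ (Fin 3) | ‖x‖ = 1} \
      (⋃ i, {x : EuclideanSpace ℝ (Fin 3) | ‖x‖ = 1 ∧ (inner ℝ x (n i) : ℝ) = 0})) :
    ∃ m : EuclideanSpace ℝ (Fin 3), ‖m‖ = 1 ∧
      ∀ x ∈ U, ∃ y ∈ connectedComponentIn U x, (inner ℝ y m : ℝ) = 0 := by
  have hU' : U = sphereOffHyperplanes n := by
    ext x
    simp +contextual [hU, sphereOffHyperplanes]
  obtain ⟨m, hm, hmn⟩ :=
    exists_norm_eq_one_forall_inner_eq_zero_of_not_linearIndependent (by simp) hdep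
  subst hU'
  exact ⟨m, hm, fun x hx =>
    exists_mem_connectedComponentIn_sphereOffHyperplanes_inner_eq_zero hmn hx⟩

theorem stmt_19 (n : Fin 3 → EuclideanSpace ℝ (Fin 3))
    (hn : ∀ i, ‖n i‖ = 1)
    (hdist : ∀ i j, i ≠ j → n i ≠ n j ∧ n i ≠ -(n j))
    (hdep : ¬ LinearIndependent ℝ n)
    (U : Set (EuclideanSpace ℝ (Fin 3)))
    (hU : U = {x : EuclideanSpace ℝ (Fin 3) | ‖x‖ = 1} \
      (⋃ i, {x : EuclideanSpace ℝ (Fin 3) | ‖x‖ = 1 ∧ (inner ℝ x (n i) : ℝ) = 0})) :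
    ∃ m : EuclideanSpace ℝ (Fin 3), ‖m‖ = 1 ∧
      ∀ x ∈ U, ∃ y ∈ connectedComponentIn U x, (inner ℝ y m : ℝ) = 0 :=
  stmt_19_general n hdep U hU
end
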